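/- Let F : ℝ^d → ℝ be differentiable with L_Ω-Lipschitz gradient, let R : ℝ^d → ℝ be lower semicontinuous and convex, P = F + R, and let A ∈ ℝ^{d×d} be symmetric positive definite. For w ∈ ℝ^d define the variable-metric proximal gradient step w̄ = prox_R^{A^{-1}}( w − A ∇F(w) ). Then P(w̄) ≤ P(w) + (w̄ − w)ᵀ( (L_Ω/2) I − A^{-1} )(w̄ − w). -/

import Mathlib

open scoped BigOperators RealInnerProductSpace

/-- `ℝ^d` as Euclidean space. -/
abbrev Euc (d : ℕ) := EuclideanSpace ℝ (Fin d)

/-- Action of a `d × d` real matrix on a vector of `ℝ^d`. -/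
noncomputable def mdot {d : ℕ} (M : Matrix (Fin d) (Fin d) ℝ) (x : Euc d) : Euc d :=
  Matrix.toEuclideanLin M x

/-- The quadratic form `‖x‖_M² = xᵀ M x` associated with a matrix `M`. -/
noncomputable def qf {d : ℕ} (M : Matrix (Fin d) (Fin d) ℝ) (x : Euc d) : ℝ :=
  ⟪x, mdot M x⟫

/-- `u` is a point of the scaled proximal operator `prox_R^M (w)`, i.e. a minimizer of
`y ↦ (1/2)‖y - w‖_M² + R y`, for a real-valued `R`. -/
def IsProxR {d : ℕ} (R : Euc d → ℝ) (M : Matrix (Fin d) (Fin d) ℝ) (w u : Euc d) : Prop :=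
  ∀ y, 2⁻¹ * qf M (u - w) + R u ≤ 2⁻¹ * qf M (y - w) + R y

/-!
Write `x = w̄ - w` and `g = ∇F(w)`. The descent lemma gives
`F(w̄) ≤ F(w) + ⟪g, x⟫ + (L_Ω/2)‖x‖²`. The prox step is `w̄ = prox(v)` with `v = w - A g`, and its
optimality condition says that `-A⁻¹(w̄ - v) = -A⁻¹x - g` is a subgradient of the convex `R` at `w̄`,
so `R(w̄) ≤ R(w) - ⟪g, x⟫ - xᵀA⁻¹x`. Adding the two bounds, the linear terms cancel.
-/

open Filter Topology

section Descent

variable {E : Type*} [NormedAddCommGroup E] [InnerProductSpace ℝ E] [CompleteSpace E]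

theorem HasGradientAt.hasDerivAt_comp_add_smul {F : E → ℝ} {g x u : E} {t : ℝ}
    (hF : HasGradientAt F g (x + t • u)) :
    HasDerivAt (fun s : ℝ => F (x + s • u)) ⟪g, u⟫ t := by
  have hline : HasDerivAt (fun s : ℝ => x + s • u) u t := by
    simpa using ((hasDerivAt_id t).smul_const u).const_add x
  have h := (hasGradientAt_iff_hasFDerivAt.mp hF).comp_hasDerivAt t hline
  simp only [InnerProductSpace.toDual_apply_apply] at h
  exact h

theorem le_add_inner_add_sq_of_lipschitz_gradient {F : E → ℝ} {g : E → E}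
    (hF : ∀ x, HasGradientAt F (g x) x) {L : ℝ} (hLip : ∀ x y, ‖g x - g y‖ ≤ L * ‖x - y‖)
    (x y : E) : F y ≤ F x + ⟪g x, y - x⟫ + L / 2 * ‖y - x‖ ^ 2 := by
  set u := y - x
  -- `ψ' ≤ 0` on `[0, 1]` by the Lipschitz bound, and `ψ 1 ≤ ψ 0` is the claim.
  set ψ : ℝ → ℝ := fun t => F (x + t • u) - t * ⟪g x, u⟫ - t ^ 2 * (L / 2 * ‖u‖ ^ 2)
  have hψ (t : ℝ) : HasDerivAt ψ
      (⟪g (x + t • u) - g x, u⟫ - 2 * t * (L / 2 * ‖u‖ ^ 2)) t := by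
    rw [inner_sub_left]
    refine ((hF _).hasDerivAt_comp_add_smul.sub ?_).sub ?_
    · simpa using (hasDerivAt_id t).mul_const ⟪g x, u⟫
    · simpa using (hasDerivAt_pow 2 t).mul_const (L / 2 * ‖u‖ ^ 2)
  have hψ_anti : AntitoneOn ψ (Set.Icc 0 1) := by
    refine antitoneOn_of_deriv_nonpos (convex_Icc 0 1)
      (fun t _ => (hψ t).continuousAt.continuousWithinAt)
      (fun t _ => (hψ t).differentiableAt.differentiableWithinAt) fun t ht => ?_
    rw [interior_Icc] at ht
    have hgrowth : ⟪g (x + t • u) - g x, u⟫ ≤ L * t * ‖u‖ ^ 2 :=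
      calc ⟪g (x + t • u) - g x, u⟫ ≤ ‖g (x + t • u) - g x‖ * ‖u‖ := real_inner_le_norm _ _
        _ ≤ L * ‖(x + t • u) - x‖ * ‖u‖ := by gcongr; exact hLip _ _
        _ = L * t * ‖u‖ ^ 2 := by
          rw [add_sub_cancel_left, norm_smul, Real.norm_of_nonneg ht.1.le]; ring
    rw [(hψ t).deriv]
    linarith
  have := hψ_anti (by simp) (by simp) zero_le_one
  simp only [ψ, u, zero_smul, add_zero, one_smul, add_sub_cancel, zero_mul, sub_zero, one_mul,
    one_pow, ne_eq, OfNat.ofNat_ne_zero, not_false_eq_true, zero_pow] at this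
  linarith

end Descent

section QuadraticForm

variable {d : ℕ}

theorem mdot_inner_comm {M : Matrix (Fin d) (Fin d) ℝ} (hM : M.IsHermitian) (a b : Euc d) :
    ⟪mdot M a, b⟫ = ⟪a, mdot M b⟫ :=
  Matrix.isSymmetric_toEuclideanLin_iff.mpr hM a b

theorem qf_add {M : Matrix (Fin d) (Fin d) ℝ} (hM : M.IsHermitian) (a b : Euc d) :
    qf M (a + b) = qf M a + 2 * ⟪mdot M a, b⟫ + qf M b := by
  have hsymm := mdot_inner_comm hM a b
  simp only [qf, mdot, map_add, inner_add_left, inner_add_right] at hsymm ⊢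
  linarith [real_inner_comm (Matrix.toEuclideanLin M a) b]

theorem qf_smul (M : Matrix (Fin d) (Fin d) ℝ) (t : ℝ) (a : Euc d) :
    qf M (t • a) = t ^ 2 * qf M a := by
  simp only [qf, mdot, map_smul, real_inner_smul_left, real_inner_smul_right]
  ring

theorem qf_smul_one_sub (c : ℝ) (M : Matrix (Fin d) (Fin d) ℝ) (x : Euc d) :
    qf (c • 1 - M) x = c * ‖x‖ ^ 2 - qf M x := by
  simp [qf, mdot, inner_sub_right, real_inner_smul_right]

theorem mdot_inv_mdot {A : Matrix (Fin d) (Fin d) ℝ} (hA : IsUnit A.det) (x : Euc d) :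
    mdot A⁻¹ (mdot A x) = x := by
  simp [mdot, Matrix.toLpLin_apply, Matrix.mulVec_mulVec, Matrix.nonsing_inv_mul A hA]

end QuadraticForm

theorem nonpos_of_forall_Ioc_le_mul {D k : ℝ} (h : ∀ t ∈ Set.Ioc (0 : ℝ) 1, D ≤ t * k) :
    D ≤ 0 := by
  have hlim : Tendsto (fun t : ℝ => t * k) (𝓝[>] 0) (𝓝 0) := by
    simpa using ((continuous_mul_const k).tendsto 0).mono_left nhdsWithin_le_nhds
  exact ge_of_tendsto hlim (eventually_of_mem (Ioc_mem_nhdsGT one_pos) h)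

/-- Compare `u` with `u + t • (y - u)` using convexity of `R`, divide by `t` and let `t → 0`. -/
theorem IsProxR.le_add_inner {d : ℕ} {R : Euc d → ℝ} (hR : ConvexOn ℝ Set.univ R)
    {M : Matrix (Fin d) (Fin d) ℝ} (hM : M.IsHermitian) {v u : Euc d} (hprox : IsProxR R M v u)
    (y : Euc d) : R u ≤ R y + ⟪mdot M (u - v), y - u⟫ := by
  suffices R u - R y - ⟪mdot M (u - v), y - u⟫ ≤ 0 by linarith
  refine nonpos_of_forall_Ioc_le_mul (k := 2⁻¹ * qf M (y - u)) fun t ⟨ht0, ht1⟩ => ?_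
  have hmin := hprox (u + t • (y - u))
  have hR_seg : R (u + t • (y - u)) ≤ (1 - t) * R u + t * R y := by
    have := hR.2 (Set.mem_univ u) (Set.mem_univ y) (sub_nonneg.mpr ht1) ht0.le (by ring)
    rwa [show (1 - t) • u + t • y = u + t • (y - u) by module, smul_eq_mul, smul_eq_mul] at this
  rw [show u + t • (y - u) - v = (u - v) + t • (y - u) by abel, qf_add hM, qf_smul,
    inner_smul_right] at hmin
  refine le_of_mul_le_mul_left ?_ ht0
  linarith

theorem vm_prox_gradient_descent_general {d : ℕ} (F : Euc d → ℝ) (gF : Euc d → Euc d)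
    (hF : ∀ x, HasGradientAt F (gF x) x)
    (LΩ : ℝ) (hLip : ∀ x y, ‖gF x - gF y‖ ≤ LΩ * ‖x - y‖)
    (R : Euc d → ℝ) (hconv : ConvexOn ℝ Set.univ R)
    (A : Matrix (Fin d) (Fin d) ℝ) (hA : A.PosDef) (w wbar : Euc d)
    (hprox : IsProxR R A⁻¹ (w - mdot A (gF w)) wbar) :
    F wbar + R wbar ≤ F w + R w
      + qf ((LΩ / 2) • (1 : Matrix (Fin d) (Fin d) ℝ) - A⁻¹) (wbar - w) := by
  have hdescent := le_add_inner_add_sq_of_lipschitz_gradient hF hLip w wbar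
  have hopt := hprox.le_add_inner hconv hA.isHermitian.inv w
  have hdet : IsUnit A.det := isUnit_iff_ne_zero.mpr hA.det_pos.ne'
  have hstep : mdot A⁻¹ (wbar - (w - mdot A (gF w))) = mdot A⁻¹ (wbar - w) + gF w := by
    rw [sub_sub_eq_add_sub, add_sub_right_comm, mdot, map_add, ← mdot, ← mdot,
      mdot_inv_mdot hdet]
  rw [hstep, inner_add_left, ← neg_sub wbar w, inner_neg_right, inner_neg_right] at hopt
  rw [qf_smul_one_sub, qf, real_inner_comm]
  linarith

/-- for `F` differentiable with `L_Ω`-Lipschitz gradient, `R` lsc convex,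
`P = F + R`, `A` symmetric positive definite and `w̄ = prox_R^{A⁻¹}(w − A∇F(w))`:
`P(w̄) ≤ P(w) + (w̄ − w)ᵀ((L_Ω/2)I − A⁻¹)(w̄ − w)`. -/
theorem vm_prox_gradient_descent {d : ℕ} (F : Euc d → ℝ) (gF : Euc d → Euc d)
    (hF : ∀ x, HasGradientAt F (gF x) x)
    (LΩ : ℝ) (hLip : ∀ x y, ‖gF x - gF y‖ ≤ LΩ * ‖x - y‖)
    (R : Euc d → ℝ) (hlsc : LowerSemicontinuous R) (hconv : ConvexOn ℝ Set.univ R)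
    (A : Matrix (Fin d) (Fin d) ℝ) (hA : A.PosDef) (w wbar : Euc d)
    (hprox : IsProxR R A⁻¹ (w - mdot A (gF w)) wbar) :
    F wbar + R wbar ≤ F w + R w
      + qf ((LΩ / 2) • (1 : Matrix (Fin d) (Fin d) ℝ) - A⁻¹) (wbar - w) :=
  vm_prox_gradient_descent_general F gF hF LΩ hLip R hconv A hA w wbar hprox
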